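/- Let T be a deterministic total top-down tree transducer with axiom A. If for every a ∈ Σ of rank k the tree T(a(x₁,...,x_k)) is subtree conform to A, then T is equivalent to a homomorphism. -/

import Mathlib

namespace TreeTrans

/-- Finite trees with nodes labeled by `α`. -/
inductive Tree (α : Type) : Type
  | node : α → List (Tree α) → Tree α

namespace Tree

variable {α β γ δ : Type}

def label : Tree α → α | node a _ => a
def children : Tree α → List (Tree α) | node _ ts => ts

/-- The height of a tree (a leaf has height 1). -/
def height : Tree α → ℕ
  | node _ ts => (ts.attach.map fun c => height c.1).foldr max 0 + 1
decreasing_by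
  have := List.sizeOf_lt_of_mem c.2
  simp only [Tree.node.sizeOf_spec]; omega

def mapLabel (f : α → β) : Tree α → Tree β
  | node a ts => node (f a) (ts.attach.map fun c => mapLabel f c.1)
decreasing_by
  have := List.sizeOf_lt_of_mem c.2
  simp only [Tree.node.sizeOf_spec]; omega

/-- The subtree rooted at a node (a node is a list of child indices). -/
def subtreeAt : Tree α → List ℕ → Option (Tree α)
  | t, [] => some t
  | node _ ts, i :: p =>
    match ts[i]? with
    | some c => subtreeAt c p
    | none => none

/-- The set `V(t)` of nodes of a tree. -/
def pos (t : Tree α) : Set (List ℕ) := {p | (t.subtreeAt p).isSome}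

/-- The label `t[v]` of a node (if the node exists). -/
def labelAt (t : Tree α) (p : List ℕ) : Option α := (t.subtreeAt p).map label

/-- The list of variable leaves (in left-to-right order) of a tree over `α ⊕ β`,
where `β` plays the role of the variables. -/
def varList : Tree (α ⊕ β) → List β
  | node (.inl _) ts => (ts.attach.map fun c => varList c.1).flatten
  | node (.inr x) _ => [x]
decreasing_by
  have := List.sizeOf_lt_of_mem c.2
  simp only [Tree.node.sizeOf_spec]; omega

/-- Substitution of the variables of a tree. -/
def substGen (f : γ → Tree (α ⊕ β)) : Tree (α ⊕ γ) → Tree (α ⊕ β)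
  | node (.inl a) ts => node (.inl a) (ts.attach.map fun c => substGen f c.1)
  | node (.inr x) _ => f x
decreasing_by
  have := List.sizeOf_lt_of_mem c.2
  simp only [Tree.node.sizeOf_spec]; omega

/-- View a tree over `α ⊕ β` as a tree over `α`; fails if a variable occurs. -/
def toDelta : Tree (α ⊕ β) → Option (Tree α)
  | node (.inl d) ts => ((ts.attach.map fun c => toDelta c.1).mapM id).map (node d)
  | node (.inr _) _ => none
decreasing_by
  have := List.sizeOf_lt_of_mem c.2
  simp only [Tree.node.sizeOf_spec]; omega

open Classical in
/-- The maximal common prefix pattern `t₁ ⊔ t₂` of two trees; positions where the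
trees differ are replaced by a variable (labeled `none`). -/
noncomputable def lcp : Tree α → Tree α → Tree (Option α)
  | node a ts, node b us =>
    if a = b ∧ ts.length = us.length then
      node (some a) ((ts.zip us).attach.map fun c => lcp c.1.1 c.1.2)
    else node none []
termination_by t _ => sizeOf t
decreasing_by
  obtain ⟨⟨x, y⟩, hm⟩ := c
  have := List.sizeOf_lt_of_mem (List.of_mem_zip hm).1
  simp only [Tree.node.sizeOf_spec]; omega

end Tree

open Tree

/-- A tree is well-formed w.r.t. a rank function if every node labeled `a`
has exactly `rank a` children. -/
def WF (rank : α → ℕ) (t : Tree α) : Prop :=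
  ∀ p u, t.subtreeAt p = some u → u.children.length = rank u.label

/-- Rank function on labels including variables (variables have rank 0). -/
def rankV (rank : α → ℕ) : α ⊕ β → ℕ := Sum.elim rank fun _ => 0

/-- All variable indices occurring in the tree are `< k`. -/
def VarsLt (k : ℕ) (t : Tree (α ⊕ β × ℕ)) : Prop := ∀ x ∈ varList t, x.2 < k

/-- Ground trees: no variables occur. -/
def GroundT (t : Tree (α ⊕ β)) : Prop := varList t = []

/-- Embedding of pure trees into trees possibly containing variables. -/
def embed : Tree α → Tree (α ⊕ β) := mapLabel Sum.inl

/-- The input tree `x₁`. -/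
def xvar {α : Type} : Tree (α ⊕ ℕ) := .node (.inr 0) []

/-- A context: a well-formed input tree containing exactly one variable,
namely `x₁` (index `0`). -/
def IsContext (rank : α → ℕ) (c : Tree (α ⊕ ℕ)) : Prop :=
  WF (rankV rank) c ∧ varList c = [0]

/-- A member of `T_Σ{X_k}`: each of the variables `x₁,…,x_k` occurs exactly once
and in left-to-right order. -/
def IsPattern (rank : α → ℕ) (k : ℕ) (s : Tree (α ⊕ ℕ)) : Prop :=
  WF (rankV rank) s ∧ varList s = List.range k

/-- `c·s`, plugging `s` into the unique variable of the context `c`. -/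
def plug (c : Tree (α ⊕ ℕ)) (s : Tree (α ⊕ β)) : Tree (α ⊕ β) :=
  substGen (fun _ => s) c

/-- A node labeled `b` (a "state-variable" leaf) occurs in `t`. -/
def OccursIn (t : Tree (α ⊕ β)) (b : β) : Prop := ∃ p, t.labelAt p = some (.inr b)

/-- `v` is the lowest common ancestor (longest common prefix) of the set `S` of nodes. -/
def IsLcaOf (S : Set (List ℕ)) (v : List ℕ) : Prop :=
  (∀ p ∈ S, v <+: p) ∧ ∀ w, (∀ p ∈ S, w <+: p) → w <+: v

/-- The set of nodes of `t` labeled `q(x_i)` for some state `q`. -/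
def varPos (t : Tree (α ⊕ β × γ)) (i : γ) : Set (List ℕ) :=
  {p | ∃ q : β, t.labelAt p = some (.inr (q, i))}

/-- An output tree is lca-conform if below the lowest common ancestor `ν(x_i)` of
the leaves labeled `q(x_i)` no leaf labeled `q(x_j)` with `j ≠ i` occurs. -/
def LcaConformTree (t : Tree (α ⊕ β × γ)) : Prop :=
  ∀ i v, IsLcaOf (varPos t i) v → ∀ u, t.subtreeAt v = some u →
    ∀ p q j, j ≠ i → u.labelAt p ≠ some (.inr (q, j))

/-- `t₁ ≃ t₂`: equality up to a bijective renaming of the variables. -/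
def Simeq (t₁ t₂ : Tree (α ⊕ β × ℕ)) : Prop :=
  ∃ f : ℕ → ℕ,
    Set.BijOn f {x | x ∈ (varList t₁).map Prod.snd} {x | x ∈ (varList t₂).map Prod.snd} ∧
    t₂ = mapLabel (Sum.map id (Prod.map id f)) t₁

/-- `t` is subtree conform to `t'`. -/
inductive SubtreeConform (t' : Tree (α ⊕ β × ℕ)) : Tree (α ⊕ β × ℕ) → Prop
  | ground (t) : GroundT t → SubtreeConform t' t
  | simeq (t) : Simeq t t' → SubtreeConform t' t
  | comp (d : α) (ts : List (Tree (α ⊕ β × ℕ))) :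
      (∀ c ∈ ts, SubtreeConform t' c) → SubtreeConform t' (.node (.inl d) ts)

/-- Second-order substitution: replace every leaf labeled `(q, i)` by `f q i`. -/
def applyRhs {Q Δ β : Type} (f : Q → ℕ → Tree (Δ ⊕ β)) :
    Tree (Δ ⊕ Q × ℕ) → Tree (Δ ⊕ β)
  | .node (.inl d) ts => .node (.inl d) (ts.attach.map fun c => applyRhs f c.1)
  | .node (.inr (q, i)) _ => f q i
decreasing_by
  have := List.sizeOf_lt_of_mem c.2
  simp only [Tree.node.sizeOf_spec]; omega

/-- Partial second-order substitution. -/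
def applyRhsO {Q Δ β : Type} (f : Q → ℕ → Option (Tree (Δ ⊕ β))) :
    Tree (Δ ⊕ Q × ℕ) → Option (Tree (Δ ⊕ β))
  | .node (.inl d) ts =>
      ((ts.attach.map fun c => applyRhsO f c.1).mapM id).map (.node (.inl d))
  | .node (.inr (q, i)) _ => f q i
decreasing_by
  have := List.sizeOf_lt_of_mem c.2
  simp only [Tree.node.sizeOf_spec]; omega

/-- A deterministic total top-down tree transducer. -/
structure TDTT (Q Sig Δ : Type) (rankS : Sig → ℕ) (rankD : Δ → ℕ) : Type where
  /-- the right-hand side `rhs_T(q,a) ∈ T_Δ[Q(X_k)]` of the rule for `(q,a)` -/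
  rhs : Q → Sig → Tree (Δ ⊕ Q × ℕ)
  /-- the axiom `A ∈ T_Δ[Q(X₁)]` -/
  axm : Tree (Δ ⊕ Q × ℕ)
  rhs_wf : ∀ q a, WF (rankV rankD) (rhs q a) ∧ VarsLt (rankS a) (rhs q a)
  axm_wf : WF (rankV rankD) axm ∧ VarsLt 1 axm

namespace TDTT

variable {Q Q' Sig Δ : Type} {rankS : Sig → ℕ} {rankD : Δ → ℕ}

/-- The semantics `[[q]] : T_Σ[X] → T_Δ[Q(X)]`. -/
def semState (T : TDTT Q Sig Δ rankS rankD) : Q → Tree (Sig ⊕ ℕ) → Tree (Δ ⊕ Q × ℕ)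
  | q, .node (.inl a) ss =>
      applyRhs (fun q' i =>
        match h : ss[i]? with
        | some s => T.semState q' s
        | none => .node (.inr (q', i)) []) (T.rhs q a)
  | q, .node (.inr x) _ => .node (.inr (q, x)) []
decreasing_by
  have hm : s ∈ ss := by
    exact List.mem_of_getElem? h
  have := List.sizeOf_lt_of_mem hm
  simp only [Tree.node.sizeOf_spec]; omega

/-- The translation `T(s) = A[q(x₁) ← [[q]](s)]`. -/
def run (T : TDTT Q Sig Δ rankS rankD) (s : Tree (Sig ⊕ ℕ)) : Tree (Δ ⊕ Q × ℕ) :=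
  applyRhs (fun q _ => T.semState q s) T.axm

/-- Equivalence of two transducers: equality on all ground input trees. -/
def Equiv (T : TDTT Q Sig Δ rankS rankD) (T' : TDTT Q' Sig Δ rankS rankD) : Prop :=
  ∀ s : Tree Sig, WF rankS s → toDelta (T.run (embed s)) = toDelta (T'.run (embed s))

/-- `T` is earliest: for each state, `⊔ {[[q]](s) | s ∈ T_Σ} = x₁`, i.e. there are two
ground input trees on which `[[q]]` produces different root symbols. -/
def Earliest (T : TDTT Q Sig Δ rankS rankD) : Prop :=
  ∀ q : Q, ∃ s₁ s₂ : Tree Sig, WF rankS s₁ ∧ WF rankS s₂ ∧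
    (T.semState q (embed s₁)).label ≠ (T.semState q (embed s₂)).label

/-- Distinct states realize distinct functions on ground trees. -/
def Canonical (T : TDTT Q Sig Δ rankS rankD) : Prop :=
  ∀ q₁ q₂ : Q, q₁ ≠ q₂ → ∃ s : Tree Sig, WF rankS s ∧
    T.semState q₁ (embed s) ≠ T.semState q₂ (embed s)

def CanonicalEarliest (T : TDTT Q Sig Δ rankS rankD) : Prop :=
  T.Earliest ∧ T.Canonical

/-- Linearity: every variable occurs at most once in the axiom and each right-hand side. -/
def Linear (T : TDTT Q Sig Δ rankS rankD) : Prop :=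
  ((varList T.axm).map Prod.snd).Nodup ∧
  ∀ q a, ((varList (T.rhs q a)).map Prod.snd).Nodup

/-- States `q₁` and `q₂` occur pairwise in `T`. -/
def PairwiseOccur (T : TDTT Q Sig Δ rankS rankD) (q₁ q₂ : Q) : Prop :=
  ∃ c, IsContext rankS c ∧ ∃ p₁ p₂, p₁ ≠ p₂ ∧
    (T.run c).labelAt p₁ = some (.inr (q₁, 0)) ∧
    (T.run c).labelAt p₂ = some (.inr (q₂, 0))

/-- `(q₁,q₂) ⊢^c (q₁',q₂')`. -/
def Step (T : TDTT Q Sig Δ rankS rankD) (q₁ q₂ : Q) (c : Tree (Sig ⊕ ℕ))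
    (q₁' q₂' : Q) : Prop :=
  OccursIn (T.semState q₁ c) (q₁', 0) ∧ OccursIn (T.semState q₂ c) (q₂', 0) ∧
  (T.semState q₁ c ≠ .node (.inr (q₁', 0)) [] ∨ T.semState q₂ c ≠ .node (.inr (q₂', 0)) [])

/-- `T` is zero output twinned. -/
def ZeroOutputTwinned (T : TDTT Q Sig Δ rankS rankD) : Prop :=
  ¬ ∃ q₁ q₂ c, T.PairwiseOccur q₁ q₂ ∧ IsContext rankS c ∧ c ≠ xvar ∧
      T.Step q₁ q₂ c q₁ q₂

/-- `T` is lca-conform. -/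
def LcaConform (T : TDTT Q Sig Δ rankS rankD) : Prop :=
  ∀ k (s : Tree (Sig ⊕ ℕ)), IsPattern rankS k s → LcaConformTree (T.run s)

/-- A homomorphism: a single-state transducer with axiom `q(x₁)`. -/
def IsHom (h : TDTT Unit Sig Δ rankS rankD) : Prop :=
  h.axm = .node (.inr ((), 0)) []

end TDTT

/-- The input tree `a(x₁,…,x_k)` where `k = rank a`. -/
def inputAtom (rankS : Sig → ℕ) (a : Sig) : Tree (Sig ⊕ ℕ) :=
  .node (.inl a) ((List.range (rankS a)).map fun i => .node (.inr i) [])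

/-- A deterministic (partial) top-down tree transducer with regular look-ahead. -/
structure LATT (Q Sig Δ L : Type) (rankS : Sig → ℕ) (rankD : Δ → ℕ) : Type where
  /-- the (possibly partial) transition function of the la-automaton -/
  delta : Sig → List L → Option L
  /-- the axiom `A(l) ∈ T_Δ[Q(X₁)]`, assigned exactly to the accepting la-states -/
  axm : L → Option (Tree (Δ ⊕ Q × ℕ))
  /-- the right-hand side of the rule for `(q, a, l₁,…,l_k)` (at most one rule) -/
  rhs : Q → Sig → List L → Option (Tree (Δ ⊕ Q × ℕ))
  axm_wf : ∀ l t, axm l = some t → WF (rankV rankD) t ∧ VarsLt 1 t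
  rhs_wf : ∀ q a ls t, rhs q a ls = some t →
    WF (rankV rankD) t ∧ VarsLt (rankS a) t ∧ ls.length = rankS a

namespace LATT

variable {Q Q' Sig Δ L L' : Type} {rankS : Sig → ℕ} {rankD : Δ → ℕ}

/-- The set `F` of accepting la-states. -/
def F (M : LATT Q Sig Δ L rankS rankD) : Set L := {l | (M.axm l).isSome}

/-- The extension `δ*` of the transition function to trees in `T_Σ[L]`. -/
def deltaStar (M : LATT Q Sig Δ L rankS rankD) : Tree (Sig ⊕ L) → Option L
  | .node (.inl a) ss =>
      ((ss.attach.map fun c => M.deltaStar c.1).mapM id).bind (M.delta a)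
  | .node (.inr l) _ => some l
decreasing_by
  have := List.sizeOf_lt_of_mem c.2
  simp only [Tree.node.sizeOf_spec]; omega

mutual
/-- `[[q]]_u(s)`: the semantics of state `q` at input node `u`. -/
def lsem (M : LATT Q Sig Δ L rankS rankD) (q : Q) (u : List ℕ) :
    Tree (Sig ⊕ L) → Option (Tree (Δ ⊕ Q × List ℕ))
  | .node (.inr _) _ => some (.node (.inr (q, u)) [])
  | .node (.inl a) ss =>
      match (ss.map fun s => M.deltaStar s).mapM id with
      | none => none
      | some ls =>
        match M.rhs q a ls with
        | none => none
        | some r =>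
          applyRhsO (fun q' i => (M.lsemList u 0 ss).getD i (fun _ => none) <| q') r
termination_by t => sizeOf t
decreasing_by
  simp only [Tree.node.sizeOf_spec]; omega
def lsemList (M : LATT Q Sig Δ L rankS rankD) (u : List ℕ) (i : ℕ) :
    List (Tree (Sig ⊕ L)) → List (Q → Option (Tree (Δ ⊕ Q × List ℕ)))
  | [] => []
  | s :: ss => (fun q' => M.lsem q' (u ++ [i]) s) :: M.lsemList u (i + 1) ss
termination_by l => sizeOf l
decreasing_by
  all_goals (simp only [List.cons.sizeOf_spec]; omega)
end

/-- The translation `M(s)` for `s ∈ T_Σ[L]` (defined iff `δ*(s) ∈ F` and all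
needed rules exist). -/
def lrun (M : LATT Q Sig Δ L rankS rankD) (s : Tree (Sig ⊕ L)) :
    Option (Tree (Δ ⊕ Q × List ℕ)) :=
  (M.deltaStar s).bind fun l => (M.axm l).bind fun ax =>
    applyRhsO (fun q _ => M.lsem q [] s) ax

/-- Equivalence of two la-transducers: the same partial function on ground trees. -/
def EquivL (M : LATT Q Sig Δ L rankS rankD) (N : LATT Q' Sig Δ L' rankS rankD) : Prop :=
  ∀ s : Tree Sig, WF rankS s →
    (M.lrun (embed s)).bind toDelta = (N.lrun (embed s)).bind toDelta

/-- Equivalence of an la-transducer and a total transducer without look-ahead. -/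
def EquivT (M : LATT Q Sig Δ L rankS rankD) (T : TDTT Q' Sig Δ rankS rankD) : Prop :=
  ∀ s : Tree Sig, WF rankS s →
    (M.lrun (embed s)).bind toDelta = toDelta (T.run (embed s))

/-- `M` is total. -/
def Total (M : LATT Q Sig Δ L rankS rankD) : Prop :=
  ∀ s : Tree Sig, WF rankS s → (M.lrun (embed s)).isSome

/-- `M` is la-uniform with la-map `ρ`. -/
def LaUniformWith (M : LATT Q Sig Δ L rankS rankD) (ρ : Q → L) : Prop :=
  (∀ l t, M.axm l = some t → ∀ q i, OccursIn t (q, i) → ρ q = l) ∧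
  (∀ q a ls, ls.length = rankS a → ((M.rhs q a ls).isSome ↔ M.delta a ls = some (ρ q))) ∧
  (∀ q a ls t, M.rhs q a ls = some t → ∀ q' i, OccursIn t (q', i) → ls[i]? = some (ρ q'))

/-- `M` is la-uniform. -/
def LaUniform (M : LATT Q Sig Δ L rankS rankD) : Prop := ∃ ρ, M.LaUniformWith ρ

/-- `M` (la-uniform via `ρ`) is earliest. -/
def EarliestWith (M : LATT Q Sig Δ L rankS rankD) (ρ : Q → L) : Prop :=
  ∀ q : Q, ∃ (s₁ s₂ : Tree Sig) (t₁ t₂ : Tree (Δ ⊕ Q × List ℕ)),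
    WF rankS s₁ ∧ WF rankS s₂ ∧
    M.deltaStar (embed s₁) = some (ρ q) ∧ M.deltaStar (embed s₂) = some (ρ q) ∧
    M.lsem q [] (embed s₁) = some t₁ ∧ M.lsem q [] (embed s₂) = some t₂ ∧
    t₁.label ≠ t₂.label

/-- Distinct states with the same look-ahead realize distinct functions. -/
def CanonWith (M : LATT Q Sig Δ L rankS rankD) (ρ : Q → L) : Prop :=
  ∀ q₁ q₂ : Q, q₁ ≠ q₂ → ρ q₁ = ρ q₂ → ∃ s : Tree Sig, WF rankS s ∧
    M.deltaStar (embed s) = some (ρ q₁) ∧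
    M.lsem q₁ [] (embed s) ≠ M.lsem q₂ [] (embed s)

/-- `M` is canonical earliest. -/
def CanonicalEarliest (M : LATT Q Sig Δ L rankS rankD) : Prop :=
  ∃ ρ, M.LaUniformWith ρ ∧ M.EarliestWith ρ ∧ M.CanonWith ρ

/-- Linearity of an la-transducer. -/
def Linear (M : LATT Q Sig Δ L rankS rankD) : Prop :=
  (∀ l t, M.axm l = some t → ((varList t).map Prod.snd).Nodup) ∧
  (∀ q a ls t, M.rhs q a ls = some t → ((varList t).map Prod.snd).Nodup)

/-- A trivial look-ahead automaton: the la-transducer is in effect a transducer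
without look-ahead. -/
def TrivialLA (M : LATT Q Sig Δ Unit rankS rankD) : Prop :=
  (∀ a ls, M.delta a ls = some ()) ∧ (M.axm ()).isSome

/-- A (possibly partial) homomorphism presented as a transducer without look-ahead:
single state, trivial look-ahead and axiom `q(x₁)`. -/
def IsHomLA (M : LATT Unit Sig Δ Unit rankS rankD) : Prop :=
  (∀ a ls, M.delta a ls = some ()) ∧ M.axm () = some (.node (.inr ((), 0)) [])

/-- `M` is lca-conform. -/
def LcaConform (M : LATT Q Sig Δ L rankS rankD) : Prop :=
  ∀ s : Tree (Sig ⊕ L), WF (rankV rankS) s →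
    ∀ t, M.lrun s = some t → LcaConformTree t

/-- `n` is a difference bound of `M`: an upper bound on the heights of all
difference trees of `M`. -/
def DifferenceBound (M : LATT Q Sig Δ L rankS rankD) (n : ℕ) : Prop :=
  ∀ (c : Tree (Sig ⊕ ℕ)) (l₁ l₂ : L) t₁ t₂, IsContext rankS c →
    M.lrun (plug c (.node (.inr l₁) [])) = some t₁ →
    M.lrun (plug c (.node (.inr l₂) [])) = some t₂ →
    ∀ v, (Tree.lcp t₁ t₂).labelAt v = some none →
      ∀ u₁ u₂, t₁.subtreeAt v = some u₁ → t₂.subtreeAt v = some u₂ →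
        u₁.height ≤ n ∧ u₂.height ≤ n

end LATT

mutual
/-- `graft tM tN p`: replace in `tN` (located at position `p` of the full tree) every
node not labeled by an output symbol by the subtree of `tM` at the same position. -/
def graft {Δ β β' : Type} (tM : Tree (Δ ⊕ β)) : Tree (Δ ⊕ β') → List ℕ → Tree (Δ ⊕ β)
  | .node (.inl d) ts, p => .node (.inl d) (graftList tM p 0 ts)
  | .node (.inr _) _, p => (tM.subtreeAt p).getD tM
termination_by t _ => sizeOf t
decreasing_by
  simp only [Tree.node.sizeOf_spec]; omega
def graftList {Δ β β' : Type} (tM : Tree (Δ ⊕ β)) (p : List ℕ) (i : ℕ) :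
    List (Tree (Δ ⊕ β')) → List (Tree (Δ ⊕ β))
  | [] => []
  | t :: ts => graft tM t (p ++ [i]) :: graftList tM p (i + 1) ts
termination_by l => sizeOf l
decreasing_by
  all_goals (simp only [List.cons.sizeOf_spec]; omega)
end

/-- A tree uses only symbols from `P`. -/
def UsesOnly {Sig : Type} (P : Set Sig) (s : Tree Sig) : Prop :=
  ∀ p u, s.subtreeAt p = some u → u.label ∈ P

/-! Each right-hand side `T(a(x₁,…,x_k)) = A[q(x₁) ← rhs_T(q,a)]` is, by subtree conformity,
a ground context whose holes carry copies `A[x₁ ↦ x_j]` of the axiom. The homomorphism `h`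
keeps the context and contracts every such copy to the variable `x_j`. By induction on the
input `a(s₁,…,s_k)`, the copy of `A` at `x_j` evaluates under `T` to `A[q(x₁) ← [[q]](s_j)]
= T(s_j)`, which equals `h(s_j)` by the induction hypothesis, i.e. the value of `x_j` under `h`. -/

namespace Tree

variable {α β : Type}

theorem node_induction {motive : Tree α → Prop}
    (node : ∀ a ts, (∀ c ∈ ts, motive c) → motive (.node a ts)) : ∀ t, motive t
  | .node a ts => node a ts fun c _ => node_induction node c
decreasing_by have := List.sizeOf_lt_of_mem ‹c ∈ ts›; simp only [Tree.node.sizeOf_spec]; omega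

@[simp] theorem mapLabel_node (f : α → β) (a : α) (ts : List (Tree α)) :
    mapLabel f (.node a ts) = .node (f a) (ts.map (mapLabel f)) := by
  rw [mapLabel]; simp

@[simp] theorem varList_node_inl (a : α) (ts : List (Tree (α ⊕ β))) :
    varList (.node (.inl a) ts) = (ts.map varList).flatten := by
  rw [varList]; simp

@[simp] theorem varList_node_inr (x : β) (ts : List (Tree (α ⊕ β))) :
    varList (.node (.inr x) ts) = [x] := by
  rw [varList]

theorem mem_varList_node_inl {a : α} {ts : List (Tree (α ⊕ β))} {x : β} :
    x ∈ varList (.node (.inl a) ts) ↔ ∃ c ∈ ts, x ∈ varList c := by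
  simp

@[simp] theorem toDelta_node_inl (a : α) (ts : List (Tree (α ⊕ β))) :
    toDelta (.node (.inl a) ts) = ((ts.map toDelta).mapM id).map (.node a) := by
  rw [toDelta]; simp

end Tree

theorem wf_node_iff {α : Type} {rank : α → ℕ} {a : α} {ts : List (Tree α)} :
    WF rank (.node a ts) ↔ ts.length = rank a ∧ ∀ c ∈ ts, WF rank c := by
  constructor
  · intro h
    refine ⟨h [] _ rfl, fun c hc p u hu => ?_⟩
    obtain ⟨i, hi, rfl⟩ := List.mem_iff_getElem.1 hc
    exact h (i :: p) u (by simp [subtreeAt, List.getElem?_eq_getElem hi, hu])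
  · rintro ⟨hlen, hwf⟩ (_ | ⟨i, p⟩) u hu
    · cases hu; exact hlen
    · rw [subtreeAt] at hu
      cases hc : ts[i]? with
      | none => simp [hc] at hu
      | some c => simp only [hc] at hu; exact hwf c (List.mem_of_getElem? hc) p u hu

theorem wf_leaf {α β : Type} {rank : α → ℕ} (x : β) :
    WF (rankV rank) (.node (.inr x) [] : Tree (α ⊕ β)) :=
  wf_node_iff.2 ⟨rfl, by simp⟩

section applyRhs

variable {Q Q' Δ β : Type}

@[simp] theorem applyRhs_node_inl (f : Q → ℕ → Tree (Δ ⊕ β)) (d : Δ)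
    (ts : List (Tree (Δ ⊕ Q × ℕ))) :
    applyRhs f (.node (.inl d) ts) = .node (.inl d) (ts.map (applyRhs f)) := by
  rw [applyRhs]; simp

@[simp] theorem applyRhs_node_inr (f : Q → ℕ → Tree (Δ ⊕ β)) (q : Q) (i : ℕ) (ts) :
    applyRhs f (.node (.inr (q, i)) ts) = f q i := by
  rw [applyRhs]

theorem applyRhs_congr {f f' : Q → ℕ → Tree (Δ ⊕ β)} {t : Tree (Δ ⊕ Q × ℕ)}
    (h : ∀ q i, (q, i) ∈ varList t → f q i = f' q i) : applyRhs f t = applyRhs f' t := by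
  induction t using Tree.node_induction with
  | node a ts ih =>
    rcases a with d | ⟨q, i⟩
    · simp only [applyRhs_node_inl]
      exact congrArg _ (List.map_congr_left fun c hc =>
        ih c hc fun q i hqi => h q i (mem_varList_node_inl.2 ⟨c, hc, hqi⟩))
    · simpa using h q i

theorem applyRhs_applyRhs (g : Q' → ℕ → Tree (Δ ⊕ β)) (f : Q → ℕ → Tree (Δ ⊕ Q' × ℕ))
    (t : Tree (Δ ⊕ Q × ℕ)) :
    applyRhs g (applyRhs f t) = applyRhs (fun q i => applyRhs g (f q i)) t := by
  induction t using Tree.node_induction with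
  | node a ts ih =>
    rcases a with d | ⟨q, i⟩
    · simp only [applyRhs_node_inl, List.map_map]
      exact congrArg _ (List.map_congr_left ih)
    · simp

theorem applyRhs_mapLabel (f : Q → ℕ → Tree (Δ ⊕ β)) (r : ℕ → ℕ) (t : Tree (Δ ⊕ Q × ℕ)) :
    applyRhs f (mapLabel (Sum.map id (Prod.map id r)) t) = applyRhs (fun q i => f q (r i)) t := by
  induction t using Tree.node_induction with
  | node a ts ih =>
    rcases a with d | ⟨q, i⟩
    · simp only [mapLabel_node, Sum.map_inl, id, applyRhs_node_inl, List.map_map]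
      exact congrArg _ (List.map_congr_left ih)
    · simp

theorem applyRhs_leaf_eq_self {rankD : Δ → ℕ} {t : Tree (Δ ⊕ Q × ℕ)}
    (hwf : WF (rankV rankD) t) :
    applyRhs (fun q i => .node (.inr (q, i)) []) t = t := by
  induction t using Tree.node_induction with
  | node a ts ih =>
    obtain ⟨hlen, hwfc⟩ := wf_node_iff.1 hwf
    rcases a with d | ⟨q, i⟩
    · simp only [applyRhs_node_inl]
      exact congrArg _ ((List.map_congr_left fun c hc => ih c hc (hwfc c hc)).trans
        (List.map_id ts))
    · rw [List.eq_nil_of_length_eq_zero hlen, applyRhs_node_inr]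

theorem wf_applyRhs {rankD : Δ → ℕ} {f : Q → ℕ → Tree (Δ ⊕ β)} {t : Tree (Δ ⊕ Q × ℕ)}
    (hwf : WF (rankV rankD) t) (hf : ∀ q i, WF (rankV rankD) (f q i)) :
    WF (rankV rankD) (applyRhs f t) := by
  induction t using Tree.node_induction with
  | node a ts ih =>
    obtain ⟨hlen, hwfc⟩ := wf_node_iff.1 hwf
    rcases a with d | ⟨q, i⟩
    · rw [applyRhs_node_inl, wf_node_iff]
      refine ⟨by simpa [rankV] using hlen, ?_⟩
      simpa using fun c hc => ih c hc (hwfc c hc)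
    · simpa using hf q i

theorem exists_mem_varList_of_mem_varList_applyRhs {f : Q → ℕ → Tree (Δ ⊕ β)}
    {t : Tree (Δ ⊕ Q × ℕ)} {x : β} (hx : x ∈ varList (applyRhs f t)) :
    ∃ q i, (q, i) ∈ varList t ∧ x ∈ varList (f q i) := by
  induction t using Tree.node_induction with
  | node a ts ih =>
    rcases a with d | ⟨q, i⟩
    · simp only [applyRhs_node_inl, mem_varList_node_inl, List.mem_map] at hx
      obtain ⟨_, ⟨c, hc, rfl⟩, hxc⟩ := hx
      obtain ⟨q, i, hqi, hxf⟩ := ih c hc hxc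
      exact ⟨q, i, mem_varList_node_inl.2 ⟨c, hc, hqi⟩, hxf⟩
    · exact ⟨q, i, by simp, by simpa using hx⟩

end applyRhs

namespace TDTT

variable {Q Sig Δ : Type} {rankS : Sig → ℕ} {rankD : Δ → ℕ} (T : TDTT Q Sig Δ rankS rankD)

theorem semState_var (q : Q) (x : ℕ) (ts) :
    T.semState q (.node (.inr x) ts) = .node (.inr (q, x)) [] := by
  rw [semState]

/-- Missing arguments `x_i` of the input node are read as the variable leaf `x_i` itself. -/
theorem semState_node (q : Q) (a : Sig) (ss : List (Tree (Sig ⊕ ℕ))) :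
    T.semState q (.node (.inl a) ss) =
      applyRhs (fun q' i => T.semState q' (ss.getD i (.node (.inr i) []))) (T.rhs q a) := by
  rw [semState]
  congr 1
  funext q' i
  cases h : ss[i]? <;> simp [List.getD_eq_getElem?_getD, h, semState_var]

theorem semState_inputAtom (q : Q) (a : Sig) : T.semState q (inputAtom rankS a) = T.rhs q a := by
  have hargs : ∀ i, ((List.range (rankS a)).map fun i => (.node (.inr i) [] : Tree (Sig ⊕ ℕ))).getD
      i (.node (.inr i) []) = .node (.inr i) [] := fun i => by
    rcases lt_or_ge i (rankS a) with hi | hi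
    · simp [List.getD_eq_getElem?_getD, hi]
    · exact List.getD_eq_default _ _ (by simpa using hi)
  rw [inputAtom, semState_node]
  simp only [hargs, semState_var]
  exact applyRhs_leaf_eq_self (T.rhs_wf q a).1

theorem run_inputAtom (a : Sig) :
    T.run (inputAtom rankS a) = applyRhs (fun q _ => T.rhs q a) T.axm := by
  simp only [run, semState_inputAtom]

theorem run_node (a : Sig) (ss : List (Tree (Sig ⊕ ℕ))) :
    T.run (.node (.inl a) ss) =
      applyRhs (fun q i => T.semState q (ss.getD i (.node (.inr i) [])))
        (T.run (inputAtom rankS a)) := by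
  simp only [run, semState_node, semState_inputAtom, applyRhs_applyRhs]

theorem wf_run_inputAtom (a : Sig) : WF (rankV rankD) (T.run (inputAtom rankS a)) := by
  rw [run_inputAtom]
  exact wf_applyRhs T.axm_wf.1 fun q _ => (T.rhs_wf q a).1

theorem varsLt_run_inputAtom (a : Sig) : VarsLt (rankS a) (T.run (inputAtom rankS a)) := by
  intro x hx
  rw [run_inputAtom] at hx
  obtain ⟨q, i, -, hxr⟩ := exists_mem_varList_of_mem_varList_applyRhs hx
  exact (T.rhs_wf q a).2 x hxr

theorem run_of_isHom {h : TDTT Unit Sig Δ rankS rankD} (hh : h.IsHom) (s : Tree (Sig ⊕ ℕ)) :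
    h.run s = h.semState () s := by
  rw [run, hh, applyRhs_node_inr]

end TDTT

theorem embed_node {α β : Type} (a : α) (ts : List (Tree α)) :
    (embed (.node a ts) : Tree (α ⊕ β)) = .node (.inl a) (ts.map embed) :=
  mapLabel_node _ _ _

section Copies

variable {Q Δ β β' : Type}

/-- `t` is a copy `A[x₁ ↦ x_j]` of the axiom `A` whose variable is `x_j`. -/
def IsCopyAt (A t : Tree (Δ ⊕ Q × ℕ)) (j : ℕ) : Prop :=
  Simeq t A ∧ j ∈ (varList t).map Prod.snd

variable {A t : Tree (Δ ⊕ Q × ℕ)} {j : ℕ}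

/-- The renaming witnessing `t ≃ A` is injective and sends every variable of `t` to `x₁`. -/
theorem IsCopyAt.snd_eq (h : IsCopyAt A t j) (hA : VarsLt 1 A) : ∀ y ∈ varList t, y.2 = j := by
  obtain ⟨⟨f, hf, -⟩, hj⟩ := h
  have hf0 : ∀ z ∈ (varList t).map Prod.snd, f z = 0 := fun z hz => by
    obtain ⟨w, hw, hwz⟩ := List.mem_map.1 (hf.mapsTo hz)
    exact hwz ▸ Nat.lt_one_iff.1 (hA w hw)
  intro y hy
  have hy' : y.2 ∈ (varList t).map Prod.snd := List.mem_map_of_mem hy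
  exact hf.injOn hy' hj ((hf0 _ hy').trans (hf0 _ hj).symm)

theorem IsCopyAt.applyRhs_eq (h : IsCopyAt A t j) (hA : VarsLt 1 A) (F : Q → ℕ → Tree (Δ ⊕ β)) :
    applyRhs F t = applyRhs (fun q _ => F q j) A := by
  have hsnd := h.snd_eq hA
  obtain ⟨⟨f, -, rfl⟩, -⟩ := h
  rw [applyRhs_mapLabel]
  exact applyRhs_congr fun q i hqi => by rw [← hsnd _ hqi]

open Classical in
noncomputable def contractCopies (A : Tree (Δ ⊕ Q × ℕ)) :
    Tree (Δ ⊕ Q × ℕ) → Tree (Δ ⊕ Unit × ℕ)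
  | .node l ts =>
    if h : ∃ j, IsCopyAt A (.node l ts) j then .node (.inr ((), h.choose)) []
    else match l with
      | .inl d => .node (.inl d) (ts.attach.map fun c => contractCopies A c.1)
      | .inr (_, i) => .node (.inr ((), i)) []
decreasing_by
  have := List.sizeOf_lt_of_mem c.2
  simp only [Tree.node.sizeOf_spec]; omega

theorem contractCopies_of_isCopyAt (h : ∃ j, IsCopyAt A t j) :
    ∃ j, IsCopyAt A t j ∧ contractCopies A t = .node (.inr ((), j)) [] := by
  obtain ⟨l, ts⟩ := t
  rw [contractCopies, dif_pos h]
  exact ⟨h.choose, h.choose_spec, rfl⟩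

theorem contractCopies_node_inl {d : Δ} {ts : List (Tree (Δ ⊕ Q × ℕ))}
    (h : ¬ ∃ j, IsCopyAt A (.node (.inl d) ts) j) :
    contractCopies A (.node (.inl d) ts) = .node (.inl d) (ts.map (contractCopies A)) := by
  rw [contractCopies, dif_neg h]
  simp

theorem contractCopies_node_inr {q : Q} {i : ℕ} {ts : List (Tree (Δ ⊕ Q × ℕ))}
    (h : ¬ ∃ j, IsCopyAt A (.node (.inr (q, i)) ts) j) :
    contractCopies A (.node (.inr (q, i)) ts) = .node (.inr ((), i)) [] := by
  rw [contractCopies, dif_neg h]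

theorem wf_contractCopies {rankD : Δ → ℕ} (hwf : WF (rankV rankD) t) :
    WF (rankV rankD) (contractCopies A t) := by
  induction t using Tree.node_induction with
  | node l ts ih =>
    by_cases hcopy : ∃ j, IsCopyAt A (.node l ts) j
    · obtain ⟨j, -, hj⟩ := contractCopies_of_isCopyAt hcopy
      exact hj ▸ wf_leaf _
    obtain ⟨hlen, hwfc⟩ := wf_node_iff.1 hwf
    rcases l with d | ⟨q, i⟩
    · rw [contractCopies_node_inl hcopy, wf_node_iff]
      refine ⟨by simpa [rankV] using hlen, ?_⟩
      simpa using fun c hc => ih c hc (hwfc c hc)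
    · exact contractCopies_node_inr hcopy ▸ wf_leaf _

theorem snd_mem_of_mem_varList_contractCopies {x : Unit × ℕ}
    (hx : x ∈ varList (contractCopies A t)) : x.2 ∈ (varList t).map Prod.snd := by
  induction t using Tree.node_induction with
  | node l ts ih =>
    by_cases hcopy : ∃ j, IsCopyAt A (.node l ts) j
    · obtain ⟨j, hj, hcontract⟩ := contractCopies_of_isCopyAt hcopy
      rw [hcontract, varList_node_inr, List.mem_singleton] at hx
      exact hx ▸ hj.2
    rcases l with d | ⟨q, i⟩
    · simp only [contractCopies_node_inl hcopy, mem_varList_node_inl, List.mem_map] at hx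
      obtain ⟨_, ⟨c, hc, rfl⟩, hxc⟩ := hx
      obtain ⟨y, hy, hyx⟩ := List.mem_map.1 (ih c hc hxc)
      exact List.mem_map.2 ⟨y, mem_varList_node_inl.2 ⟨c, hc, hy⟩, hyx⟩
    · rw [contractCopies_node_inr hcopy, varList_node_inr, List.mem_singleton] at hx
      simp [hx]

theorem GroundT.exists_node_inl (ht : GroundT t) :
    ∃ d ts, t = .node (.inl d) ts ∧ ∀ c ∈ ts, GroundT c := by
  obtain ⟨l | x, ts⟩ := t
  · refine ⟨l, ts, rfl, fun c hc => ?_⟩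
    simp only [GroundT, varList_node_inl, List.flatten_eq_nil_iff, List.mem_map] at ht
    exact ht _ ⟨c, hc, rfl⟩
  · simp [GroundT] at ht

theorem SubtreeConform.exists_node_inl (ht : SubtreeConform A t)
    (hcopy : ¬ ∃ j, IsCopyAt A t j) :
    ∃ d ts, t = .node (.inl d) ts ∧ ∀ c ∈ ts, SubtreeConform A c := by
  have of_ground : GroundT t → ∃ d ts, t = .node (.inl d) ts ∧ ∀ c ∈ ts, SubtreeConform A c :=
    fun hg => (hg.exists_node_inl).imp fun d ⟨ts, h, hc⟩ =>
      ⟨ts, h, fun c hmem => .ground c (hc c hmem)⟩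
  cases ht with
  | ground _ hg => exact of_ground hg
  | simeq _ hs =>
    refine of_ground (List.eq_nil_iff_forall_not_mem.2 fun x hx => hcopy ?_)
    exact ⟨x.2, hs, List.mem_map_of_mem hx⟩
  | comp d ts hts => exact ⟨d, ts, rfl, hts⟩

theorem SubtreeConform.toDelta_applyRhs_contractCopies (ht : SubtreeConform A t)
    (hA : VarsLt 1 A) {F : Q → ℕ → Tree (Δ ⊕ β)} {G : Unit → ℕ → Tree (Δ ⊕ β')}
    (hFG : ∀ j ∈ (varList t).map Prod.snd,
      toDelta (applyRhs (fun q _ => F q j) A) = toDelta (G () j)) :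
    toDelta (applyRhs F t) = toDelta (applyRhs G (contractCopies A t)) := by
  induction t using Tree.node_induction with
  | node l ts ih =>
    by_cases hcopy : ∃ j, IsCopyAt A (.node l ts) j
    · obtain ⟨j, hj, hcontract⟩ := contractCopies_of_isCopyAt hcopy
      rw [hcontract, applyRhs_node_inr, hj.applyRhs_eq hA]
      exact hFG j hj.2
    obtain ⟨d, _, heq, hts⟩ := ht.exists_node_inl hcopy
    obtain ⟨rfl, rfl⟩ : l = .inl d ∧ ts = _ := Tree.node.inj heq
    rw [contractCopies_node_inl hcopy]
    simp only [applyRhs_node_inl, toDelta_node_inl, List.map_map]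
    congr 2
    refine List.map_congr_left fun c hc => ih c hc (hts c hc) fun j hj => hFG j ?_
    obtain ⟨y, hy, rfl⟩ := List.mem_map.1 hj
    exact List.mem_map_of_mem (mem_varList_node_inl.2 ⟨c, hc, hy⟩)

end Copies

namespace TDTT

variable {Q Sig Δ : Type} {rankS : Sig → ℕ} {rankD : Δ → ℕ} (T : TDTT Q Sig Δ rankS rankD)

noncomputable def contractHom : TDTT Unit Sig Δ rankS rankD where
  rhs _ a := contractCopies T.axm (T.run (inputAtom rankS a))
  axm := .node (.inr ((), 0)) []
  rhs_wf _ a := ⟨wf_contractCopies (T.wf_run_inputAtom a), fun x hx => by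
    obtain ⟨y, hy, hyx⟩ := List.mem_map.1 (snd_mem_of_mem_varList_contractCopies hx)
    exact hyx ▸ T.varsLt_run_inputAtom a y hy⟩
  axm_wf := ⟨wf_leaf _, by simp [VarsLt]⟩

theorem isHom_contractHom : T.contractHom.IsHom := rfl

theorem equiv_contractHom (hconf : ∀ a, SubtreeConform T.axm (T.run (inputAtom rankS a))) :
    T.Equiv T.contractHom := by
  intro s
  induction s using Tree.node_induction with
  | node a ss ih =>
    intro hwf
    obtain ⟨hlen, hwfc⟩ := wf_node_iff.1 hwf
    have hrhs : T.contractHom.run (inputAtom rankS a) =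
        contractCopies T.axm (T.run (inputAtom rankS a)) := by
      rw [run_of_isHom T.isHom_contractHom, semState_inputAtom]
      rfl
    rw [embed_node, run_node, run_node, hrhs]
    refine (hconf a).toDelta_applyRhs_contractCopies T.axm_wf.2 fun j hj => ?_
    obtain ⟨y, hy, rfl⟩ := List.mem_map.1 hj
    have hj : y.2 < ss.length := hlen ▸ T.varsLt_run_inputAtom a y hy
    have harg : (ss.map embed).getD y.2 (.node (.inr y.2) []) = embed ss[y.2] := by
      simp [List.getD_eq_getElem?_getD, hj]
    rw [harg, ← run_of_isHom T.isHom_contractHom]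
    exact ih _ (List.getElem_mem hj) (hwfc _ (List.getElem_mem hj))

end TDTT

/-- If for every `a ∈ Σ` the tree `T(a(x₁,…,x_k))` is subtree
conform to the axiom `A` of `T`, then `T` is equivalent to a homomorphism. -/
theorem hom_of_subtree_conform {Q Sig Δ : Type} [Fintype Q] [Fintype Sig] [Fintype Δ]
    {rankS : Sig → ℕ} {rankD : Δ → ℕ}
    (T : TDTT Q Sig Δ rankS rankD)
    (hconf : ∀ a : Sig, SubtreeConform T.axm (T.run (inputAtom rankS a))) :
    ∃ h : TDTT Unit Sig Δ rankS rankD, h.IsHom ∧ T.Equiv h :=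
  ⟨T.contractHom, T.isHom_contractHom, T.equiv_contractHom hconf⟩

end TreeTrans
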